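/- Let N be a positive integer and B an integer with 2 ≤ B ≤ ⌈N/2⌉. Let w ∈ ℂ^N be a window and i an integer such that ŵ_{(i+t) mod N} = 0 for all t = 0, …, N − B − 1, ŵ_{(i+N−B) mod N} ≠ 0, and ŵ_{(i+N−B+1) mod N} ≠ 0. Let L be an integer with 0 < L < N and ⌈N/L⌉ ≥ 3, and let m1, m2, m3 be pairwise distinct integers with 0 ≤ m_j ≤ ⌈N/L⌉ − 1. Then there exists a nonzero polynomial P in N variables with complex coefficients such that for every x ∈ ℝ^N with P(x) ≠ 0 (evaluating P at the real vector x), the analytic signal z = A(x) is determined up to a global sign by its 3⌊N/2⌋ + 1 STFT magnitudes: for every analytic signal z̃ ∈ ℂ^N, if |ŷ^w_{(⌊N/2⌋−(i+N−B)) mod N, 0}(z̃)| = |ŷ^w_{(⌊N/2⌋−(i+N−B)) mod N, 0}(z)| and |ŷ^w_{(k−(i+N−B)) mod N, m_j}(z̃)| = |ŷ^w_{(k−(i+N−B)) mod N, m_j}(z)| for all k = 0, …, ⌊N/2⌋ − 1 and j = 1, 2, 3, then z̃ = z or z̃ = −z. -/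

import Mathlib

open Complex

/-- Discrete Fourier transform of a signal indexed by `ZMod N`. -/
noncomputable def dft {N : ℕ} (z : ZMod N → ℂ) (k : ZMod N) : ℂ :=
  ∑ n ∈ Finset.range N, z n *
    Complex.exp (-2 * (Real.pi : ℂ) * Complex.I * (k.val : ℂ) * (n : ℂ) / N)

/-- Short-time Fourier transform measurement `ŷ^w_{k,m}(z)` with window `w` and
separation parameter `L`. -/
noncomputable def stft {N : ℕ} (w : ZMod N → ℂ) (L : ℤ) (z : ZMod N → ℂ) (k m : ℤ) : ℂ :=
  ∑ n ∈ Finset.range N, z n * w ((m * L - n : ℤ) : ZMod N) *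
    Complex.exp (-2 * (Real.pi : ℂ) * Complex.I * (k : ℂ) * (n : ℂ) / N)

/-- The DFT of the analytic signal associated with a real signal `x`. -/
noncomputable def analyticHat (N : ℕ) (x : ZMod N → ℝ) (k : ℕ) : ℂ :=
  if N % 2 = 0 then
    if k = 0 then dft (fun n => (x n : ℂ)) 0
    else if k ≤ N / 2 - 1 then 2 * dft (fun n => (x n : ℂ)) (k : ZMod N)
    else if k = N / 2 then dft (fun n => (x n : ℂ)) ((N / 2 : ℕ) : ZMod N)
    else 0
  else
    if k = 0 then dft (fun n => (x n : ℂ)) 0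
    else if k ≤ (N - 1) / 2 then 2 * dft (fun n => (x n : ℂ)) (k : ZMod N)
    else 0

/-- The analytic signal `A(x)` of a real signal `x`, obtained by inverse DFT. -/
noncomputable def analyticSignal {N : ℕ} (x : ZMod N → ℝ) : ZMod N → ℂ :=
  fun n => (1 / N : ℂ) * ∑ k ∈ Finset.range N, analyticHat N x k *
    Complex.exp (2 * (Real.pi : ℂ) * Complex.I * (k : ℂ) * (n.val : ℂ) / N)

/-- A signal `z ∈ ℂ^N` is analytic if `z = A(x)` for some real signal `x`. -/
def IsAnalytic {N : ℕ} (z : ZMod N → ℂ) : Prop := ∃ x : ZMod N → ℝ, z = analyticSignal x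

/-!
Write `W s = ŵ (i + N - B + s)` for the `B` window coefficients that may be nonzero and
`ψ m = exp (2πi m L / N)`. Because `ŵ` is supported on `B` consecutive frequencies, the STFT
of `A(x)` at frequency `κ - (i + N - B)` and time `m` is, up to a unimodular factor and `1/N`,
the banded sum `∑_{s<B} W s (ψ m)^s Â(x)_{κ+s}`, and `Â(x)` vanishes above `N/2`.
The measurement at `κ = N/2` fixes `Â(x̃)_{N/2}` up to a unimodular factor `θ`. Going down in `κ`,
once `Â(x̃)` and `θ Â(x)` agree above `κ`, the three measurements at `κ` say that `W 0 Â_κ` is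
equidistant from three points determined by `Â(x)`, and three such points that are not collinear
pin it down. Non-collinearity is the non-vanishing of a polynomial in `x`: for real `x` the
conjugate of a linear form in `x` is again one. Cosine test signals show this polynomial is
nonzero, using that the `ψ m_j` are three distinct points of the unit circle. Finally `Â_0` is
real, so `θ = ±1`.
-/

open Finset
open ZMod (stdAddChar)
open scoped ComplexConjugate ZMod

section Fourier

variable {N : ℕ} [NeZero N]

lemma sum_range_eq_sum_val {M : Type*} [AddCommMonoid M] (f : ℕ → M) :
    ∑ n ∈ range N, f n = ∑ j : ZMod N, f j.val :=
  sum_nbij' (↑) ZMod.val (by simp) (by simp [ZMod.val_lt])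
    (fun n hn => ZMod.val_cast_of_lt (mem_range.1 hn)) (by simp)
    (fun n hn => by rw [ZMod.val_cast_of_lt (mem_range.1 hn)])

lemma stdAddChar_intCast_mul_natCast (t : ℤ) (n : ℕ) :
    stdAddChar ((t : ZMod N) * (n : ZMod N)) = exp (2 * Real.pi * I * t * n / N) := by
  rw [← Int.cast_natCast, ← Int.cast_mul, ZMod.stdAddChar_coe]
  push_cast
  ring_nf

lemma dft_eq_zmod_dft (z : ZMod N → ℂ) : dft z = 𝓕 z := by
  ext k
  rw [dft, ZMod.dft_apply, sum_range_eq_sum_val]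
  refine sum_congr rfl fun j _ => ?_
  rw [ZMod.natCast_zmod_val, smul_eq_mul, mul_comm,
    show -(j * k) = ((-k.val : ℤ) : ZMod N) * (j.val : ℕ) by simp [mul_comm],
    stdAddChar_intCast_mul_natCast]
  push_cast
  ring_nf

lemma stft_eq_dft (w z : ZMod N → ℂ) (L k m : ℤ) :
    stft w L z k m = 𝓕 (fun n => z n * w ((m * L : ℤ) - n)) k := by
  rw [stft, ZMod.dft_apply, sum_range_eq_sum_val]
  refine sum_congr rfl fun j _ => ?_
  rw [smul_eq_mul, mul_comm, show -(j * k) = ((-k : ℤ) : ZMod N) * (j.val : ℕ) by simp; ring,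
    stdAddChar_intCast_mul_natCast]
  push_cast
  simp only [ZMod.natCast_zmod_val]
  ring_nf

lemma dft_mul_comp_sub (z w : ZMod N → ℂ) (a k : ZMod N) :
    𝓕 (fun n => z n * w (a - n)) k
      = (N : ℂ)⁻¹ * ∑ l, 𝓕 w l * stdAddChar (l * a) * 𝓕 z (k + l) := by
  have hw : ∀ n, w (a - n) = (N : ℂ)⁻¹ * ∑ l, stdAddChar (l * (a - n)) * 𝓕 w l := fun n => by
    conv_lhs => rw [← (ZMod.dft (N := N) (E := ℂ)).symm_apply_apply w]
    simp only [ZMod.invDFT_apply, smul_eq_mul]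
  have hχ : ∀ l n : ZMod N, stdAddChar (-(n * k)) * stdAddChar (l * (a - n))
      = stdAddChar (l * a) * stdAddChar (-(n * (k + l))) := fun l n => by
    rw [← AddChar.map_add_eq_mul, ← AddChar.map_add_eq_mul]
    ring_nf
  rw [ZMod.dft_apply]
  simp only [ZMod.dft_apply z, hw, smul_eq_mul, mul_sum]
  rw [sum_comm]
  refine sum_congr rfl fun l _ => sum_congr rfl fun n _ => ?_
  linear_combination ((N : ℂ)⁻¹ * z n * 𝓕 w l) * hχ l n

lemma sum_eq_sum_range_of_eq_zero {M : Type*} [AddCommMonoid M] {B : ℕ} (hB : B ≤ N)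
    (f : ZMod N → M) (i : ZMod N) (hf : ∀ t : ℕ, t + B < N → f (i + t) = 0) :
    ∑ l, f l = ∑ s ∈ range B, f (i + (N - B + s : ℕ)) := by
  calc ∑ l, f l = ∑ l, f (i + l) := (Equiv.sum_comp (Equiv.addLeft i) f).symm
    _ = ∑ t ∈ range N, f (i + t) := by simp [sum_range_eq_sum_val]
    _ = ∑ t ∈ range (N - B), f (i + t) + ∑ s ∈ range B, f (i + (N - B + s : ℕ)) := by
      rw [← sum_range_add, Nat.sub_add_cancel hB]
    _ = _ := by
      rw [sum_eq_zero fun t ht => hf t (by simp at ht; omega), zero_add]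

end Fourier

-- `hr` says that `r₁`, `r₂`, `r₃` are not collinear.
lemma eq_of_norm_add_eq_of_im_ne_zero {p q r₁ r₂ r₃ : ℂ} (h₁ : ‖p + r₁‖ = ‖q + r₁‖)
    (h₂ : ‖p + r₂‖ = ‖q + r₂‖) (h₃ : ‖p + r₃‖ = ‖q + r₃‖)
    (hr : (conj (r₁ - r₂) * (r₁ - r₃)).im ≠ 0) : p = q := by
  have hsq : ∀ r, ‖p + r‖ = ‖q + r‖ →
      (p.re + r.re) ^ 2 + (p.im + r.im) ^ 2 = (q.re + r.re) ^ 2 + (q.im + r.im) ^ 2 := by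
    intro r h
    have := congrArg (· ^ 2) h
    simp only [← normSq_eq_norm_sq, normSq_apply, add_re, add_im] at this
    linear_combination this
  have e₁ := hsq _ h₁
  have e₂ := hsq _ h₂
  have e₃ := hsq _ h₃
  simp only [mul_im, conj_re, conj_im, sub_re, sub_im] at hr
  apply Complex.ext <;> apply mul_right_cancel₀ hr
  · linear_combination ((r₁.im - r₃.im) * (e₁ - e₂) - (r₁.im - r₂.im) * (e₁ - e₃)) / 2
  · linear_combination ((r₁.re - r₂.re) * (e₁ - e₃) - (r₁.re - r₃.re) * (e₁ - e₂)) / 2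

lemma im_conj_sub_mul_sub_ne_zero {a b c : ℂ} (ha : ‖a‖ = 1) (hb : ‖b‖ = 1) (hc : ‖c‖ = 1)
    (hab : a ≠ b) (hac : a ≠ c) (hbc : b ≠ c) : (conj (a - b) * (a - c)).im ≠ 0 := by
  have h0 : ∀ z : ℂ, ‖z‖ = 1 → z ≠ 0 := fun z hz h => by simp [h] at hz
  have key : conj (a - b) * (a - c) - conj (conj (a - b) * (a - c))
      = (b - a) * (a - c) * (c - b) / (a * b * c) := by
    simp only [map_mul, map_sub, conj_conj]
    rw [← inv_eq_conj ha, ← inv_eq_conj hb, ← inv_eq_conj hc]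
    field_simp [h0 a ha, h0 b hb, h0 c hc]
    ring
  have hne : (b - a) * (a - c) * (c - b) / (a * b * c) ≠ 0 :=
    div_ne_zero (mul_ne_zero (mul_ne_zero (sub_ne_zero.2 hab.symm) (sub_ne_zero.2 hac))
      (sub_ne_zero.2 hbc.symm)) (mul_ne_zero (mul_ne_zero (h0 a ha) (h0 b hb)) (h0 c hc))
  intro him
  rw [sub_conj, him] at key
  exact hne (by simpa using key.symm)

section BandSum

variable (W : ℕ → ℂ) (B : ℕ)

noncomputable def bandSum (ψ : ℂ) (c : ℕ → ℂ) (κ : ℕ) : ℂ :=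
  ∑ s ∈ range B, W s * ψ ^ s * c (κ + s)

noncomputable def bandTail (ψ : ℂ) (c : ℕ → ℂ) (κ : ℕ) : ℂ :=
  ∑ s ∈ Ico 1 B, W s * ψ ^ s * c (κ + s)

variable {W B}

lemma bandSum_eq_add_bandTail (hB : 0 < B) (ψ : ℂ) (c : ℕ → ℂ) (κ : ℕ) :
    bandSum W B ψ c κ = W 0 * c κ + bandTail W B ψ c κ := by
  rw [bandSum, range_eq_Ico, sum_eq_sum_Ico_succ_bot hB]
  simp [bandTail]

lemma bandSum_smul (ψ θ : ℂ) (c : ℕ → ℂ) (κ : ℕ) :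
    bandSum W B ψ (θ • c) κ = θ * bandSum W B ψ c κ := by
  simp only [bandSum, mul_sum, Pi.smul_apply, smul_eq_mul]
  exact sum_congr rfl fun s _ => by ring

lemma bandSum_of_eq_zero (hB : 0 < B) (ψ : ℂ) {c : ℕ → ℂ} {M : ℕ} (hc : ∀ j, M < j → c j = 0) :
    bandSum W B ψ c M = W 0 * c M := by
  rw [bandSum_eq_add_bandTail hB, bandTail, sum_eq_zero, add_zero]
  intro s hs
  rw [hc _ (by simp at hs; omega), mul_zero]

lemma bandTail_congr (ψ : ℂ) {a b : ℕ → ℂ} {κ : ℕ} (h : ∀ j, κ < j → a j = b j) :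
    bandTail W B ψ a κ = bandTail W B ψ b κ :=
  sum_congr rfl fun s hs => by rw [h _ (by simp at hs; omega)]

lemma bandTail_of_eq_zero (hB : 2 ≤ B) (ψ : ℂ) {c : ℕ → ℂ} {κ : ℕ}
    (hc : ∀ s, 2 ≤ s → c (κ + s) = 0) :
    bandTail W B ψ c κ = W 1 * ψ * c (κ + 1) := by
  rw [bandTail, sum_eq_single_of_mem 1 (by simp; omega), pow_one]
  intro s hs hs1
  rw [hc s (by simp at hs; omega), mul_zero]

variable {ι : Type*} {ψ : ι → ℂ} {m₁ m₂ m₃ : ι}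

theorem eq_of_norm_bandSum_eq {M : ℕ} {a b : ℕ → ℂ} (hB : 0 < B) (hW : W 0 ≠ 0)
    (htop : ∀ j, M ≤ j → a j = b j)
    (hmeas : ∀ κ < M, ∀ m ∈ ({m₁, m₂, m₃} : Set ι),
      ‖bandSum W B (ψ m) a κ‖ = ‖bandSum W B (ψ m) b κ‖)
    (hgen : ∀ κ < M, (conj (bandTail W B (ψ m₁) b κ - bandTail W B (ψ m₂) b κ) *
      (bandTail W B (ψ m₁) b κ - bandTail W B (ψ m₃) b κ)).im ≠ 0) :
    a = b := by
  -- Downward induction on `k`: `bandTail W B _ _ k` only involves indices above `k`.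
  suffices h : ∀ k ≤ M, ∀ j, k ≤ j → a j = b j from
    funext fun j => h 0 M.zero_le j j.zero_le
  intro k hk
  induction hk using Nat.decreasingInduction with
  | self => exact htop
  | of_succ k hk ih =>
    have hnorm : ∀ m ∈ ({m₁, m₂, m₃} : Set ι),
        ‖W 0 * a k + bandTail W B (ψ m) b k‖ = ‖W 0 * b k + bandTail W B (ψ m) b k‖ := by
      intro m hm
      have h := hmeas k hk m hm
      rwa [bandSum_eq_add_bandTail hB, bandSum_eq_add_bandTail hB, bandTail_congr _ ih] at h
    have hk' : a k = b k := mul_left_cancel₀ hW <| eq_of_norm_add_eq_of_im_ne_zero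
      (hnorm m₁ (by simp)) (hnorm m₂ (by simp)) (hnorm m₃ (by simp)) (hgen k hk)
    intro j hj
    rcases hj.eq_or_lt with rfl | hj
    exacts [hk', ih j hj]

theorem exists_norm_eq_one_eq_smul_of_norm_bandSum_eq {M : ℕ} {ψ₀ : ℂ} {a b : ℕ → ℂ}
    (hB : 0 < B) (hW : W 0 ≠ 0) (ha : ∀ j, M < j → a j = 0) (hb : ∀ j, M < j → b j = 0)
    (hbM : b M ≠ 0) (htop : ‖bandSum W B ψ₀ a M‖ = ‖bandSum W B ψ₀ b M‖)
    (hmeas : ∀ κ < M, ∀ m ∈ ({m₁, m₂, m₃} : Set ι),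
      ‖bandSum W B (ψ m) a κ‖ = ‖bandSum W B (ψ m) b κ‖)
    (hgen : ∀ κ < M, (conj (bandTail W B (ψ m₁) b κ - bandTail W B (ψ m₂) b κ) *
      (bandTail W B (ψ m₁) b κ - bandTail W B (ψ m₃) b κ)).im ≠ 0) :
    ∃ θ : ℂ, ‖θ‖ = 1 ∧ a = θ • b := by
  rw [bandSum_of_eq_zero hB ψ₀ ha, bandSum_of_eq_zero hB ψ₀ hb, norm_mul, norm_mul] at htop
  have hnorm : ‖a M‖ = ‖b M‖ := mul_left_cancel₀ (norm_ne_zero_iff.2 hW) htop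
  have haM : a M ≠ 0 := norm_ne_zero_iff.1 (hnorm ▸ norm_ne_zero_iff.2 hbM)
  have hθ : ‖a M / b M‖ = 1 := by rw [norm_div, hnorm, div_self (norm_ne_zero_iff.2 hbM)]
  refine ⟨a M / b M, hθ, ?_⟩
  have key : (a M / b M)⁻¹ • a = b := by
    refine eq_of_norm_bandSum_eq hB hW (fun j hj => ?_) (fun κ hκ m hm => ?_) hgen
    · rcases hj.eq_or_lt with rfl | hj
      · rw [Pi.smul_apply, smul_eq_mul, inv_div, div_mul_cancel₀ _ haM]
      · simp [ha j hj, hb j hj]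
    · rw [bandSum_smul, norm_mul, norm_inv, hθ, inv_one, one_mul]
      exact hmeas κ hκ m hm
  exact (smul_inv_smul₀ (div_ne_zero haM hbM) a).symm.trans (congrArg _ key)

end BandSum

section Analytic

variable {N : ℕ}

def analyticWeight (N k : ℕ) : ℂ :=
  if k = 0 ∨ 2 * k = N then 1 else if 2 * k < N then 2 else 0

lemma analyticHat_eq_weight_mul (x : ZMod N → ℝ) (k : ℕ) :
    analyticHat N x k = analyticWeight N k * dft (fun n => (x n : ℂ)) k := by
  unfold analyticHat analyticWeight
  split_ifs <;> first | omega | simp_all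

lemma analyticWeight_ne_zero {k : ℕ} (hk : k ≤ N / 2) : analyticWeight N k ≠ 0 := by
  unfold analyticWeight
  split_ifs <;> first | omega | norm_num

lemma analyticHat_eq_zero (x : ZMod N → ℝ) {k : ℕ} (hk : N / 2 < k) : analyticHat N x k = 0 := by
  rw [analyticHat_eq_weight_mul, analyticWeight, if_neg (by omega), if_neg (by omega), zero_mul]

variable [NeZero N]

lemma analyticHat_zero (x : ZMod N → ℝ) : analyticHat N x 0 = ((∑ n, x n : ℝ) : ℂ) := by
  rw [analyticHat_eq_weight_mul, dft_eq_zmod_dft, Nat.cast_zero, ZMod.dft_apply_zero]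
  simp [analyticWeight]

lemma analyticSignal_eq_invDFT (x : ZMod N → ℝ) :
    analyticSignal x = 𝓕⁻ (fun k => analyticHat N x k.val) := by
  ext n
  rw [analyticSignal, ZMod.invDFT_apply, sum_range_eq_sum_val, smul_eq_mul, one_div]
  congr 1
  refine sum_congr rfl fun k _ => ?_
  rw [smul_eq_mul, mul_comm, show k * n = ((k.val : ℤ) : ZMod N) * (n.val : ℕ) by simp,
    stdAddChar_intCast_mul_natCast]
  push_cast
  ring_nf

lemma dft_analyticSignal (x : ZMod N → ℝ) {k : ℕ} (hk : k < N) :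
    𝓕 (analyticSignal x) k = analyticHat N x k := by
  rw [analyticSignal_eq_invDFT, LinearEquiv.apply_symm_apply, ZMod.val_cast_of_lt hk]

lemma analyticSignal_eq_or_eq_neg {x y : ZMod N → ℝ} {θ : ℂ} (hθ : ‖θ‖ = 1)
    (h : analyticHat N y = θ • analyticHat N x) (h0 : analyticHat N x 0 ≠ 0) :
    analyticSignal y = analyticSignal x ∨ analyticSignal y = -analyticSignal x := by
  have h0' := congrFun h 0
  rw [Pi.smul_apply, smul_eq_mul, analyticHat_zero, analyticHat_zero] at h0'
  rw [analyticHat_zero, Ne, ofReal_eq_zero] at h0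
  have hθr : θ = ((∑ n, y n) / ∑ n, x n : ℝ) := by
    rw [ofReal_div, h0', mul_div_cancel_right₀ _ (ofReal_ne_zero.2 h0)]
  have hsig : analyticSignal y = θ • analyticSignal x := by
    rw [analyticSignal_eq_invDFT, analyticSignal_eq_invDFT, ← map_smul, h]
    rfl
  rw [hθr, norm_real, Real.norm_eq_abs, abs_eq zero_le_one] at hθ
  rcases hθ with hθ | hθ <;> simp [hsig, hθr, hθ]

end Analytic

section Measurements

variable {N B : ℕ} [NeZero N]

lemma stft_eq_sum_range (hB : B ≤ N) (w z : ZMod N → ℂ) (i : ℤ)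
    (hzero : ∀ t : ℕ, (t : ℤ) ≤ (N : ℤ) - B - 1 → dft w ((i + t : ℤ) : ZMod N) = 0)
    (L k m : ℤ) :
    stft w L z k m = (N : ℂ)⁻¹ * stdAddChar (((i + N - B) * (m * L) : ℤ) : ZMod N) *
      ∑ s ∈ range B, dft w ((i + N - B + s : ℤ) : ZMod N) *
        stdAddChar ((m * L : ℤ) : ZMod N) ^ s * 𝓕 z ((k + (i + N - B) + s : ℤ) : ZMod N) := by
  rw [stft_eq_dft, dft_mul_comp_sub, sum_eq_sum_range_of_eq_zero hB _ (i : ZMod N), mul_assoc]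
  · congr 1
    rw [mul_sum]
    refine sum_congr rfl fun s _ => ?_
    have hl : (i : ZMod N) + ((N - B + s : ℕ) : ZMod N) = ((i + N - B + s : ℤ) : ZMod N) := by
      push_cast [Nat.cast_sub hB]
      ring
    have hχ : stdAddChar (((i + N - B + s : ℤ) : ZMod N) * ((m * L : ℤ) : ZMod N))
        = stdAddChar (((i + N - B) * (m * L) : ℤ) : ZMod N) *
          stdAddChar ((m * L : ℤ) : ZMod N) ^ s := by
      rw [← AddChar.map_nsmul_eq_pow, ← AddChar.map_add_eq_mul]
      push_cast
      ring_nf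
    have hz : (k : ZMod N) + ((i + N - B + s : ℤ) : ZMod N)
        = ((k + (i + N - B) + s : ℤ) : ZMod N) := by
      push_cast
      ring
    rw [hl, dft_eq_zmod_dft, hχ, hz]
    ring
  · intro t ht
    have h := hzero t (by omega)
    rw [dft_eq_zmod_dft, Int.cast_add, Int.cast_natCast] at h
    rw [h, zero_mul, zero_mul]

lemma norm_stft_analyticSignal (w : ZMod N → ℂ) (i : ℤ)
    (hzero : ∀ t : ℕ, (t : ℤ) ≤ (N : ℤ) - B - 1 → dft w ((i + t : ℤ) : ZMod N) = 0)
    (x : ZMod N → ℝ) (L m : ℤ) {κ : ℕ} (hκ : κ + B ≤ N) :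
    ‖stft w L (analyticSignal x) (κ - (i + N - B)) m‖
      = ‖bandSum (fun s => dft w ((i + N - B + s : ℤ) : ZMod N)) B
          (stdAddChar ((m * L : ℤ) : ZMod N)) (analyticHat N x) κ‖ / N := by
  rw [stft_eq_sum_range (by omega) w _ i hzero, norm_mul, norm_mul, AddChar.norm_apply, mul_one,
    norm_inv, Complex.norm_natCast, inv_mul_eq_div, bandSum]
  congr 2
  refine sum_congr rfl fun s hs => ?_
  rw [show (((κ : ℤ) - (i + N - B) + (i + N - B) + s : ℤ) : ZMod N) = ((κ + s : ℕ) : ZMod N) by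
    push_cast; ring, dft_analyticSignal x (by simp at hs; omega)]

end Measurements

section CosineSignal

variable {N : ℕ} [NeZero N]

noncomputable def cosSignal (j : ℕ) : ZMod N → ℝ := fun n => (stdAddChar ((j : ZMod N) * n)).re

lemma dft_stdAddChar_mul (j k : ZMod N) :
    𝓕 (fun n => stdAddChar (j * n)) k = if k = j then (N : ℂ) else 0 := by
  rw [ZMod.dft_apply]
  simp_rw [smul_eq_mul, ← AddChar.map_add_eq_mul, show ∀ n, -(n * k) + j * n = n * (j - k) by
    intro n; ring]
  rw [AddChar.sum_mulShift _ (ZMod.isPrimitive_stdAddChar N), ZMod.card]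
  simp [sub_eq_zero, eq_comm]

lemma dft_cosSignal (j : ℕ) (k : ZMod N) :
    𝓕 (fun n => (cosSignal j n : ℂ)) k
      = (N / 2 : ℂ) * ((if k = j then 1 else 0) + if k = -j then 1 else 0) := by
  have h : (fun n => (cosSignal j n : ℂ))
      = (1 / 2 : ℂ) • ((fun n => stdAddChar ((j : ZMod N) * n)) +
          fun n => stdAddChar (-(j : ZMod N) * n)) := by
    ext n
    simp [cosSignal, re_eq_add_conj, ← AddChar.map_neg_eq_conj, div_eq_inv_mul]
  rw [h, map_smul, map_add, Pi.smul_apply, Pi.add_apply, dft_stdAddChar_mul, dft_stdAddChar_mul]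
  split_ifs <;> ring

lemma eq_of_natCast_eq_or_eq_neg {j k : ℕ} (hj : j ≤ N / 2) (hk : k ≤ N / 2)
    (h : (k : ZMod N) = j ∨ (k : ZMod N) = -j) : k = j := by
  have := NeZero.pos N
  rcases h with h | h
  · rw [ZMod.natCast_eq_natCast_iff', Nat.mod_eq_of_lt (by omega), Nat.mod_eq_of_lt (by omega)] at h
    exact h
  · rw [eq_neg_iff_add_eq_zero, ← Nat.cast_add, ZMod.natCast_eq_zero_iff] at h
    rcases Nat.lt_or_ge (k + j) N with hlt | hge
    · have := Nat.eq_zero_of_dvd_of_lt h hlt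
      omega
    · omega

lemma analyticHat_cosSignal_eq_zero {j k : ℕ} (hj : j ≤ N / 2) (hk : k ≤ N / 2) (hne : k ≠ j) :
    analyticHat N (cosSignal j) k = 0 := by
  rw [analyticHat_eq_weight_mul, dft_eq_zmod_dft, dft_cosSignal, if_neg, if_neg]
  · simp
  · exact fun h => hne (eq_of_natCast_eq_or_eq_neg hj hk (Or.inr h))
  · exact fun h => hne (eq_of_natCast_eq_or_eq_neg hj hk (Or.inl h))

lemma analyticHat_cosSignal_self_ne_zero {j : ℕ} (hj : j ≤ N / 2) :
    analyticHat N (cosSignal j) j ≠ 0 := by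
  rw [analyticHat_eq_weight_mul, dft_eq_zmod_dft, dft_cosSignal, if_pos rfl]
  refine mul_ne_zero (analyticWeight_ne_zero hj) (mul_ne_zero ?_ ?_)
  · simp [NeZero.ne N]
  · split_ifs <;> norm_num

end CosineSignal

section GenericPolynomial

open MvPolynomial

lemma eval_map_conj_ofReal {ι : Type*} (F : MvPolynomial ι ℂ) (x : ι → ℝ) :
    eval (fun n => (x n : ℂ)) (map (starRingEnd ℂ) F) = conj (eval (fun n => (x n : ℂ)) F) := by
  rw [eval_map, MvPolynomial.eval, coe_eval₂Hom, eval₂_comp_left, RingHom.comp_id]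
  congr
  ext n
  simp

noncomputable def imPoly {ι : Type*} (F : MvPolynomial ι ℂ) : MvPolynomial ι ℂ :=
  F - map (starRingEnd ℂ) F

lemma eval_imPoly_ne_zero_iff {ι : Type*} (F : MvPolynomial ι ℂ) (x : ι → ℝ) :
    eval (fun n => (x n : ℂ)) (imPoly F) ≠ 0 ↔ (eval (fun n => (x n : ℂ)) F).im ≠ 0 := by
  rw [imPoly, map_sub, eval_map_conj_ofReal, sub_conj]
  simp [I_ne_zero]

variable {N : ℕ} [NeZero N]

noncomputable def dftPoly (k : ZMod N) : MvPolynomial (ZMod N) ℂ :=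
  ∑ n, C (stdAddChar (-(n * k))) * X n

lemma eval_dftPoly (y : ZMod N → ℂ) (k : ZMod N) : eval y (dftPoly k) = 𝓕 y k := by
  simp [dftPoly, ZMod.dft_apply]

noncomputable def analyticHatPoly (k : ℕ) : MvPolynomial (ZMod N) ℂ :=
  C (analyticWeight N k) * dftPoly (k : ZMod N)

lemma eval_analyticHatPoly (x : ZMod N → ℝ) (k : ℕ) :
    eval (fun n => (x n : ℂ)) (analyticHatPoly k) = analyticHat N x k := by
  rw [analyticHat_eq_weight_mul, dft_eq_zmod_dft, analyticHatPoly, map_mul, eval_C, eval_dftPoly]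

noncomputable def bandTailPoly (W : ℕ → ℂ) (B : ℕ) (ψ : ℂ) (κ : ℕ) : MvPolynomial (ZMod N) ℂ :=
  ∑ s ∈ Ico 1 B, C (W s * ψ ^ s) * analyticHatPoly (κ + s)

lemma eval_bandTailPoly (W : ℕ → ℂ) (B : ℕ) (ψ : ℂ) (κ : ℕ) (x : ZMod N → ℝ) :
    eval (fun n => (x n : ℂ)) (bandTailPoly W B ψ κ) = bandTail W B ψ (analyticHat N x) κ := by
  simp [bandTailPoly, bandTail, eval_analyticHatPoly]

noncomputable def genericPoly (W : ℕ → ℂ) (B : ℕ) (ψ₁ ψ₂ ψ₃ : ℂ) : MvPolynomial (ZMod N) ℂ :=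
  analyticHatPoly 0 * analyticHatPoly (N / 2) * ∏ κ ∈ range (N / 2),
    imPoly (map (starRingEnd ℂ) (bandTailPoly W B ψ₁ κ - bandTailPoly W B ψ₂ κ) *
      (bandTailPoly W B ψ₁ κ - bandTailPoly W B ψ₃ κ))

variable {W : ℕ → ℂ} {B : ℕ} {ψ₁ ψ₂ ψ₃ : ℂ}

lemma of_eval_genericPoly_ne_zero {x : ZMod N → ℝ}
    (hx : eval (fun n => (x n : ℂ)) (genericPoly W B ψ₁ ψ₂ ψ₃) ≠ 0) :
    analyticHat N x 0 ≠ 0 ∧ analyticHat N x (N / 2) ≠ 0 ∧ ∀ κ < N / 2,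
      (conj (bandTail W B ψ₁ (analyticHat N x) κ - bandTail W B ψ₂ (analyticHat N x) κ) *
        (bandTail W B ψ₁ (analyticHat N x) κ - bandTail W B ψ₃ (analyticHat N x) κ)).im ≠ 0 := by
  simp only [genericPoly, map_mul, map_prod, mul_ne_zero_iff, prod_ne_zero_iff, mem_range,
    eval_imPoly_ne_zero_iff, eval_map_conj_ofReal, map_sub, eval_bandTailPoly,
    eval_analyticHatPoly] at hx
  exact ⟨hx.1.1, hx.1.2, fun κ hκ => by simpa only [map_sub] using hx.2 κ hκ⟩

lemma genericPoly_ne_zero (hB : 2 ≤ B) (hW : W 1 ≠ 0) (h₁ : ‖ψ₁‖ = 1) (h₂ : ‖ψ₂‖ = 1)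
    (h₃ : ‖ψ₃‖ = 1) (h₁₂ : ψ₁ ≠ ψ₂) (h₁₃ : ψ₁ ≠ ψ₃) (h₂₃ : ψ₂ ≠ ψ₃) :
    genericPoly (N := N) W B ψ₁ ψ₂ ψ₃ ≠ 0 := by
  have ne_zero_of_eval : ∀ {F : MvPolynomial (ZMod N) ℂ} (x : ZMod N → ℝ),
      eval (fun n => (x n : ℂ)) F ≠ 0 → F ≠ 0 := fun x h hF => h (by rw [hF, map_zero])
  have hhat : ∀ j ≤ N / 2, analyticHatPoly (N := N) j ≠ 0 := fun j hj =>
    ne_zero_of_eval (cosSignal j) <| by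
      rw [eval_analyticHatPoly]; exact analyticHat_cosSignal_self_ne_zero hj
  refine mul_ne_zero (mul_ne_zero (hhat 0 (Nat.zero_le _)) (hhat _ le_rfl))
    (prod_ne_zero_iff.2 fun κ hκ => ne_zero_of_eval (cosSignal (κ + 1)) ?_)
  rw [mem_range] at hκ
  set c := analyticHat N (cosSignal (κ + 1))
  have hc : ∀ s, 2 ≤ s → c (κ + s) = 0 := fun s hs => by
    rcases le_or_gt (κ + s) (N / 2) with h | h
    · exact analyticHat_cosSignal_eq_zero (by omega) h (by omega)
    · exact analyticHat_eq_zero _ h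
  have hc1 : c (κ + 1) ≠ 0 := analyticHat_cosSignal_self_ne_zero (by omega)
  have hT : ∀ ψ, eval (fun n => (cosSignal (κ + 1) n : ℂ)) (bandTailPoly (N := N) W B ψ κ)
      = W 1 * c (κ + 1) * ψ := fun ψ => by
    rw [eval_bandTailPoly, bandTail_of_eq_zero hB _ hc]
    ring
  have hfactor : eval (fun n => (cosSignal (κ + 1) n : ℂ))
      (map (starRingEnd ℂ) (bandTailPoly (N := N) W B ψ₁ κ - bandTailPoly W B ψ₂ κ) *
        (bandTailPoly W B ψ₁ κ - bandTailPoly W B ψ₃ κ))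
      = (normSq (W 1 * c (κ + 1)) : ℂ) * (conj (ψ₁ - ψ₂) * (ψ₁ - ψ₃)) := by
    rw [normSq_eq_conj_mul_self]
    simp only [map_mul, eval_map_conj_ofReal, map_sub, hT]
    ring
  rw [eval_imPoly_ne_zero_iff, hfactor, im_ofReal_mul]
  exact mul_ne_zero (normSq_pos.2 (mul_ne_zero hW hc1)).ne'
    (im_conj_sub_mul_sub_ne_zero h₁ h₂ h₃ h₁₂ h₁₃ h₂₃)

end GenericPolynomial

lemma mul_lt_of_le_ceil_div_sub_one {N : ℕ} {L m : ℤ} (hL : 0 < L)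
    (hm : m ≤ ⌈(N : ℚ) / (L : ℚ)⌉ - 1) : m * L < N := by
  have h : (m : ℚ) < N / L := Int.lt_ceil.1 (by omega)
  rw [lt_div_iff₀ (by exact_mod_cast hL)] at h
  exact_mod_cast h

lemma stdAddChar_mul_ne_of_ne {N : ℕ} [NeZero N] {L m m' : ℤ} (hL : 0 < L)
    (hm : 0 ≤ m) (hm' : m ≤ ⌈(N : ℚ) / (L : ℚ)⌉ - 1)
    (hn : 0 ≤ m') (hn' : m' ≤ ⌈(N : ℚ) / (L : ℚ)⌉ - 1) (hne : m ≠ m') :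
    stdAddChar ((m * L : ℤ) : ZMod N) ≠ stdAddChar ((m' * L : ℤ) : ZMod N) := by
  intro h
  replace h := ZMod.injective_stdAddChar h
  rw [ZMod.intCast_eq_intCast_iff', Int.emod_eq_of_lt (by positivity)
    (mul_lt_of_le_ceil_div_sub_one hL hm'), Int.emod_eq_of_lt (by positivity)
    (mul_lt_of_le_ceil_div_sub_one hL hn')] at h
  exact hne (mul_right_cancel₀ hL.ne' h)

theorem stft_pr_bandlimited_window_general (N : ℕ)
    (B : ℕ) (hB2 : 2 ≤ B) (hBle : B ≤ (N + 1) / 2)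
    (w : ZMod N → ℂ) (i : ℤ)
    (hzero : ∀ t : ℕ, (t : ℤ) ≤ (N : ℤ) - B - 1 → dft w ((i + t : ℤ) : ZMod N) = 0)
    (hwB : dft w ((i + N - B : ℤ) : ZMod N) ≠ 0)
    (hwB1 : dft w ((i + N - B + 1 : ℤ) : ZMod N) ≠ 0)
    (L : ℤ) (hL0 : 0 < L)
    (m1 m2 m3 : ℤ)
    (hm1 : 0 ≤ m1) (hm1' : m1 ≤ ⌈(N : ℚ) / (L : ℚ)⌉ - 1)
    (hm2 : 0 ≤ m2) (hm2' : m2 ≤ ⌈(N : ℚ) / (L : ℚ)⌉ - 1)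
    (hm3 : 0 ≤ m3) (hm3' : m3 ≤ ⌈(N : ℚ) / (L : ℚ)⌉ - 1)
    (h12 : m1 ≠ m2) (h13 : m1 ≠ m3) (h23 : m2 ≠ m3) :
    ∃ P : MvPolynomial (ZMod N) ℂ, P ≠ 0 ∧
      ∀ x : ZMod N → ℝ, MvPolynomial.eval (fun n => (x n : ℂ)) P ≠ 0 →
        ∀ zt : ZMod N → ℂ, IsAnalytic zt →
          ‖stft w L zt (((N / 2 : ℕ) : ℤ) - (i + N - B)) 0‖ =
            ‖stft w L (analyticSignal x) (((N / 2 : ℕ) : ℤ) - (i + N - B)) 0‖ →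
          (∀ k : ℕ, k < N / 2 → ∀ m ∈ ({m1, m2, m3} : Set ℤ),
            ‖stft w L zt ((k : ℤ) - (i + N - B)) m‖ =
              ‖stft w L (analyticSignal x) ((k : ℤ) - (i + N - B)) m‖) →
          zt = analyticSignal x ∨ zt = -analyticSignal x := by
  have : NeZero N := ⟨by omega⟩
  set W : ℕ → ℂ := fun s => dft w ((i + N - B + s : ℤ) : ZMod N) with hW
  set ψ : ℤ → ℂ := fun m => stdAddChar ((m * L : ℤ) : ZMod N)
  have hW0 : W 0 ≠ 0 := by simpa [hW] using hwB
  have hW1 : W 1 ≠ 0 := by simpa [hW] using hwB1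
  refine ⟨genericPoly W B (ψ m1) (ψ m2) (ψ m3), genericPoly_ne_zero hB2 hW1
    (AddChar.norm_apply _ _) (AddChar.norm_apply _ _) (AddChar.norm_apply _ _)
    (stdAddChar_mul_ne_of_ne hL0 hm1 hm1' hm2 hm2' h12)
    (stdAddChar_mul_ne_of_ne hL0 hm1 hm1' hm3 hm3' h13)
    (stdAddChar_mul_ne_of_ne hL0 hm2 hm2' hm3 hm3' h23), ?_⟩
  rintro x hx _ ⟨y, rfl⟩ htop hmeas
  obtain ⟨h0, hM, hgen⟩ := of_eval_genericPoly_ne_zero hx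
  have hnorm : ∀ (z : ZMod N → ℝ) (κ : ℕ) (m : ℤ), κ ≤ N / 2 →
      ‖stft w L (analyticSignal z) (κ - (i + N - B)) m‖
        = ‖bandSum W B (ψ m) (analyticHat N z) κ‖ / N :=
    fun z κ m hκ => norm_stft_analyticSignal w i hzero z L m (by omega)
  have hN : (N : ℝ) ≠ 0 := Nat.cast_ne_zero.2 (NeZero.ne N)
  have hmeas' : ∀ κ < N / 2, ∀ m ∈ ({m1, m2, m3} : Set ℤ),
      ‖bandSum W B (ψ m) (analyticHat N y) κ‖ = ‖bandSum W B (ψ m) (analyticHat N x) κ‖ := by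
    intro κ hκ m hm
    have h := hmeas κ hκ m hm
    rwa [hnorm y κ m hκ.le, hnorm x κ m hκ.le, div_left_inj' hN] at h
  rw [hnorm y _ 0 le_rfl, hnorm x _ 0 le_rfl, div_left_inj' hN] at htop
  obtain ⟨θ, hθ, hyx⟩ := exists_norm_eq_one_eq_smul_of_norm_bandSum_eq (by omega) hW0
    (fun _ => analyticHat_eq_zero y) (fun _ => analyticHat_eq_zero x) hM htop hmeas' hgen
  exact analyticSignal_eq_or_eq_neg hθ hyx h0

/-- Theorem `abc` of the paper: a generic analytic signal is
determined up to a global sign by `3⌊N/2⌋ + 1` STFT measurements with a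
`B`-bandlimited window, `2 ≤ B ≤ ⌈N/2⌉`. -/
theorem stft_pr_bandlimited_window (N : ℕ) (hN : 0 < N)
    (B : ℕ) (hB2 : 2 ≤ B) (hBle : B ≤ (N + 1) / 2)
    (w : ZMod N → ℂ) (i : ℤ)
    (hzero : ∀ t : ℕ, (t : ℤ) ≤ (N : ℤ) - B - 1 → dft w ((i + t : ℤ) : ZMod N) = 0)
    (hwB : dft w ((i + N - B : ℤ) : ZMod N) ≠ 0)
    (hwB1 : dft w ((i + N - B + 1 : ℤ) : ZMod N) ≠ 0)
    (L : ℤ) (hL0 : 0 < L) (hLN : L < (N : ℤ)) (hceil : 3 ≤ ⌈(N : ℚ) / (L : ℚ)⌉)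
    (m1 m2 m3 : ℤ)
    (hm1 : 0 ≤ m1) (hm1' : m1 ≤ ⌈(N : ℚ) / (L : ℚ)⌉ - 1)
    (hm2 : 0 ≤ m2) (hm2' : m2 ≤ ⌈(N : ℚ) / (L : ℚ)⌉ - 1)
    (hm3 : 0 ≤ m3) (hm3' : m3 ≤ ⌈(N : ℚ) / (L : ℚ)⌉ - 1)
    (h12 : m1 ≠ m2) (h13 : m1 ≠ m3) (h23 : m2 ≠ m3) :
    ∃ P : MvPolynomial (ZMod N) ℂ, P ≠ 0 ∧
      ∀ x : ZMod N → ℝ, MvPolynomial.eval (fun n => (x n : ℂ)) P ≠ 0 →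
        ∀ zt : ZMod N → ℂ, IsAnalytic zt →
          ‖stft w L zt (((N / 2 : ℕ) : ℤ) - (i + N - B)) 0‖ =
            ‖stft w L (analyticSignal x) (((N / 2 : ℕ) : ℤ) - (i + N - B)) 0‖ →
          (∀ k : ℕ, k < N / 2 → ∀ m ∈ ({m1, m2, m3} : Set ℤ),
            ‖stft w L zt ((k : ℤ) - (i + N - B)) m‖ =
              ‖stft w L (analyticSignal x) ((k : ℤ) - (i + N - B)) m‖) →
          zt = analyticSignal x ∨ zt = -analyticSignal x :=
  stft_pr_bandlimited_window_general N B hB2 hBle w i hzero hwB hwB1 L hL0 m1 m2 m3 hm1 hm1' hm2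
    hm2' hm3 hm3' h12 h13 h23
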